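/- Let (u₁ₙ, u₂ₙ) be a solution of the Gudnason system at index n. Then ∫_𝕋 εₙ⁻² e^{u₂ₙ}(1 − e^{u₂ₙ}) dx ≤ 2𝔑|𝕋| = 2𝔑; here the integrand is nonnegative (since u₂ₙ < 0), so this integral also equals ∫_𝕋 εₙ⁻² e^{u₂ₙ}|1 − e^{u₂ₙ}| dx. -/

import Mathlib

open MeasureTheory Real Filter

noncomputable section

abbrev Plane : Type := EuclideanSpace ℝ (Fin 2)

/-- Second directional derivative of `u` at `x` in the direction `v`. -/
def dirDeriv2 (u : Plane → ℝ) (v x : Plane) : ℝ :=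
  deriv (fun t : ℝ => deriv (fun s : ℝ => u (x + s • v)) t) 0

/-- The flat Laplacian on the plane. -/
def lap (u : Plane → ℝ) (x : Plane) : ℝ :=
  ∑ i : Fin 2, dirDeriv2 u (EuclideanSpace.single i 1) x

/-- The data of the Gudnason model on a flat torus `ℝ²/Λ`. -/
structure GudnasonSetting where
  v : Fin 2 → Plane
  N : ℕ
  p : Fin N → Plane
  m : Fin N → ℕ
  𝔑 : ℝ
  α : ℕ → ℝ
  β : ℕ → ℝ
  u₀ : Plane → ℝ

namespace GudnasonSetting

/-- The lattice orbit of a point: all of its translates by the period lattice. -/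
def orbit (S : GudnasonSetting) (q : Plane) : Set Plane :=
  {x | ∃ k : Fin 2 → ℤ, x = q + (k 0 : ℝ) • S.v 0 + (k 1 : ℝ) • S.v 1}

/-- The set of vortex points (together with all of their lattice translates). -/
def Zset (S : GudnasonSetting) : Set Plane := ⋃ i, S.orbit (S.p i)

/-- A fundamental domain of the torus. -/
def fund (S : GudnasonSetting) : Set Plane :=
  (fun st : ℝ × ℝ => st.1 • S.v 0 + st.2 • S.v 1) '' (Set.Ico (0:ℝ) 1 ×ˢ Set.Ico (0:ℝ) 1)

/-- The total vortex multiplicity `𝔐 = Σ mᵢ`. -/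
def 𝔐 (S : GudnasonSetting) : ℝ := ∑ i, (S.m i : ℝ)

/-- `εₙ = 1/(αₙ + βₙ)`. -/
def ε (S : GudnasonSetting) (n : ℕ) : ℝ := 1 / (S.α n + S.β n)

/-- `σₙ = (βₙ - αₙ)/(αₙ + βₙ)`. -/
def σ (S : GudnasonSetting) (n : ℕ) : ℝ := (S.β n - S.α n) / (S.α n + S.β n)

/-- A function on the plane descends to the torus iff it is lattice-periodic. -/
def PeriodicOn (S : GudnasonSetting) (u : Plane → ℝ) : Prop :=
  ∀ x : Plane, ∀ i : Fin 2, u (x + S.v i) = u x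

/-- The standing hypotheses on the data of the Gudnason model. -/
structure Valid (S : GudnasonSetting) : Prop where
  indep : LinearIndependent ℝ S.v
  hN : 0 < S.N
  distinct : ∀ i j : Fin S.N, i ≠ j → S.p i ∉ S.orbit (S.p j)
  hm : ∀ i, 0 < S.m i
  h𝔑 : 0 < S.𝔑
  hα : ∀ n, 0 < S.α n
  hβ : ∀ n, 0 < S.β n
  hsum : Tendsto (fun n => S.α n + S.β n) atTop atTop
  hcoup₁ : ∀ n, 0 < (S.β n - S.α n) * (S.α n + S.β n)
  hcoup₂ : ∀ n, (S.β n - S.α n) * (S.α n + S.β n) ≤ S.𝔑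
  area : volume S.fund = 1
  u₀_per : S.PeriodicOn S.u₀
  u₀_smooth : ContDiffOn ℝ 2 S.u₀ S.Zsetᶜ
  u₀_lap : ∀ x ∉ S.Zset, lap S.u₀ x = -(8 * π * S.𝔐)
  u₀_int : (∫ x in S.fund, S.u₀ x) = 0
  u₀_sing : ∀ i, ∃ r > 0, ∃ h : Plane → ℝ,
      ContDiffOn ℝ 2 h (Metric.ball (S.p i) r) ∧
      ∀ x ∈ Metric.ball (S.p i) r, x ≠ S.p i →
        S.u₀ x = 4 * (S.m i : ℝ) * Real.log ‖x - S.p i‖ + h x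

/-- `(u₁, u₂)` is a solution of the Gudnason system at index `n`, where `v₁` is the
`C²` extension of `u₁ - u₀` to the whole torus. -/
structure IsSolution (S : GudnasonSetting) (n : ℕ) (u₁ u₂ v₁ : Plane → ℝ) : Prop where
  per₁ : S.PeriodicOn u₁
  per₂ : S.PeriodicOn u₂
  perv : S.PeriodicOn v₁
  u₂_smooth : ContDiff ℝ 2 u₂
  v₁_smooth : ContDiff ℝ 2 v₁
  v₁_def : ∀ x ∉ S.Zset, u₁ x = S.u₀ x + v₁ x
  u₁_neg : ∀ x ∉ S.Zset, u₁ x < 0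
  u₂_neg : ∀ x, u₂ x < 0
  exp_u₁_zero : ∀ z ∈ S.Zset,
      Tendsto (fun y => Real.exp (u₁ y)) (nhdsWithin z S.Zsetᶜ) (nhds 0)
  eq₁ : ∀ x ∉ S.Zset, lap u₁ x =
      (1 / (S.ε n) ^ 2) * (Real.exp (u₁ x) * (Real.exp (u₁ x) - 1)
        + (S.σ n) ^ 2 * Real.exp (u₂ x) * (Real.exp (u₁ x) - 1)
        - S.σ n * (Real.exp (u₁ x) + Real.exp (u₂ x)) * (Real.exp (u₂ x) - 1))
  eq₂ : ∀ x ∉ S.Zset, lap u₂ x =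
      (1 / (S.ε n) ^ 2) * (Real.exp (u₂ x) * (Real.exp (u₂ x) - 1)
        + (S.σ n) ^ 2 * Real.exp (u₁ x) * (Real.exp (u₂ x) - 1)
        - S.σ n * (Real.exp (u₁ x) + Real.exp (u₂ x)) * (Real.exp (u₁ x) - 1))

end GudnasonSetting

/-! Integrate the second equation over a fundamental domain of the period lattice. The Laplacian
integrates to zero: for a periodic `C¹` function `g`, `t ↦ ∫ g (t • w + x)` over a fundamental
domain is constant, and its derivative at `0` is the integral of the directional derivative.
Off the vortex points the coupling terms are bounded pointwise: with `s = α + β`, `d = β − α`,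
`ε⁻²σ² e^{u₁}(e^{u₂} − 1) = d² e^{u₁}(e^{u₂} − 1) ≤ 0` and
`−ε⁻²σ (e^{u₁} + e^{u₂})(e^{u₁} − 1) = d s (e^{u₁} + e^{u₂})(1 − e^{u₁}) ≤ 2 d s ≤ 2𝔑`,
and the vortex points form a null set. -/

open Function Pointwise

theorem Function.Periodic.of_mem_span_int {E F : Type*} [AddCommGroup E] {g : E → F} {s : Set E}
    (hg : ∀ c ∈ s, Periodic g c) {l : E} (hl : l ∈ Submodule.span ℤ s) : Periodic g l := by
  induction hl using Submodule.span_induction with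
  | mem c hc => exact hg c hc
  | zero => exact fun x => congrArg g (add_zero x)
  | add _ _ _ _ h₁ h₂ => exact h₁.add_period h₂
  | smul n _ _ h => exact h.zsmul n

theorem Function.Periodic.fderiv {E F : Type*} [NormedAddCommGroup E] [NormedSpace ℝ E]
    [NormedAddCommGroup F] [NormedSpace ℝ F] {g : E → F} {a : E} (hg : Periodic g a) :
    Periodic (fderiv ℝ g) a := fun x => by
  rw [← fderiv_comp_add_right, hg.funext]

namespace ZSpan

variable {E F ι : Type*} [NormedAddCommGroup E] [NormedSpace ℝ E] [NormedAddCommGroup F]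
  [Finite ι] (b : Module.Basis ι ℝ E)

theorem exists_nnnorm_le_of_periodic {g : E → F} (hg : Continuous g)
    (hper : ∀ i, Periodic g (b i)) : ∃ C : NNReal, ∀ x, ‖g x‖₊ ≤ C := by
  have := b.finiteDimensional_of_finite
  obtain ⟨C, hC⟩ :=
    (fundamentalDomain_isBounded b).isCompact_closure.exists_bound_of_continuousOn hg.continuousOn
  refine ⟨C.toNNReal, fun x => ?_⟩
  obtain ⟨l, hl⟩ := (exist_unique_vadd_mem_fundamentalDomain b x).exists
  rw [← NNReal.coe_le_coe, coe_nnnorm,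
    ← Periodic.of_mem_span_int (Set.forall_mem_range.2 hper) l.2 x, add_comm]
  exact (hC _ (subset_closure hl)).trans (Real.le_coe_toNNReal C)

variable [MeasurableSpace E] [BorelSpace E] (μ : Measure E)

theorem integrableOn_fundamentalDomain_of_continuous [IsFiniteMeasureOnCompacts μ] {f : E → F}
    (hf : Continuous f) : IntegrableOn f (fundamentalDomain b) μ :=
  have := b.finiteDimensional_of_finite
  (hf.continuousOn.integrableOn_compact
    (fundamentalDomain_isBounded b).isCompact_closure).mono_set subset_closure

variable [NormedSpace ℝ F]

theorem setIntegral_fundamentalDomain_comp_add_left [μ.IsAddLeftInvariant] {g : E → F}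
    (hper : ∀ i, Periodic g (b i)) (w : E) :
    ∫ x in fundamentalDomain b, g (w + x) ∂μ = ∫ x in fundamentalDomain b, g x ∂μ := by
  have : Countable (Submodule.span ℤ (Set.range b)).toAddSubgroup :=
    inferInstanceAs (Countable (Submodule.span ℤ (Set.range b)))
  have hD := ZSpan.isAddFundamentalDomain' b μ
  calc ∫ x in fundamentalDomain b, g (w + x) ∂μ
      = ∫ x in w +ᵥ fundamentalDomain b, g x ∂μ :=
        ((measurePreserving_add_left μ w).setIntegral_image_emb
          (measurableEmbedding_addLeft w) g _).symm
    _ = ∫ x in fundamentalDomain b, g x ∂μ :=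
        (hD.vadd_of_comm w).setIntegral_eq hD fun l x => by
          rw [AddSubgroup.vadd_def, vadd_eq_add, add_comm]
          exact Periodic.of_mem_span_int (Set.forall_mem_range.2 hper) l.2 x

theorem setIntegral_fundamentalDomain_fderiv_apply_eq_zero [μ.IsAddLeftInvariant]
    [IsFiniteMeasureOnCompacts μ] {g : E → F} (hg : ContDiff ℝ 1 g)
    (hper : ∀ i, Periodic g (b i)) (w : E) :
    ∫ x in fundamentalDomain b, fderiv ℝ g x w ∂μ = 0 := by
  have := b.finiteDimensional_of_finite
  have hdiff : Differentiable ℝ g := hg.differentiable one_ne_zero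
  have hline :
      ∀ x t, HasDerivAt (fun t : ℝ => g (t • w + x)) (fderiv ℝ g (t • w + x) w) t :=
    fun x t => (hdiff _).hasFDerivAt.comp_hasDerivAt t
      (by simpa using ((hasDerivAt_id t).smul_const w).add_const x)
  obtain ⟨C, hC⟩ := exists_nnnorm_le_of_periodic b (hg.continuous_fderiv one_ne_zero)
    fun i => (hper i).fderiv
  have hlip : ∀ x, LipschitzWith (C * ‖w‖₊) (fun t : ℝ => g (t • w + x)) := fun x =>
    lipschitzWith_of_nnnorm_deriv_le (fun t => (hline x t).differentiableAt) fun t => by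
      rw [(hline x t).deriv]
      exact ((fderiv ℝ g _).le_opNNNorm w).trans (mul_le_mul_left (hC _) _)
  have hcont : ∀ t : ℝ, Continuous fun x => g (t • w + x) := fun t => by fun_prop
  have hderiv := hasDerivAt_integral_of_dominated_loc_of_lip
    (μ := μ.restrict (fundamentalDomain b)) (F := fun (t : ℝ) x => g (t • w + x))
    (bound := fun _ => (C * ‖w‖₊ : ℝ)) (x₀ := 0)
    (Metric.ball_mem_nhds 0 one_pos)
    (.of_forall fun t => (hcont t).aestronglyMeasurable)
    (integrableOn_fundamentalDomain_of_continuous b μ (hcont 0))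
    ((hg.continuous_fderiv one_ne_zero).clm_apply continuous_const).aestronglyMeasurable
    (.of_forall fun x => by simpa using (hlip x).lipschitzOnWith)
    (integrableOn_fundamentalDomain_of_continuous b μ continuous_const)
    (.of_forall fun x => by simpa using hline x 0)
  have hconst : (fun t : ℝ => ∫ x in fundamentalDomain b, g (t • w + x) ∂μ) =
      fun _ => ∫ x in fundamentalDomain b, g x ∂μ :=
    funext fun t => setIntegral_fundamentalDomain_comp_add_left b μ hper (t • w)
  rw [hconst] at hderiv
  exact hderiv.2.unique (hasDerivAt_const 0 _)

end ZSpan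

section Laplacian

variable {u : Plane → ℝ}

theorem contDiff_fderiv_apply (hu : ContDiff ℝ 2 u) (v : Plane) :
    ContDiff ℝ 1 fun y => fderiv ℝ u y v :=
  (hu.fderiv_right (by norm_num)).clm_apply contDiff_const

theorem continuous_fderiv_fderiv_apply (hu : ContDiff ℝ 2 u) (v w : Plane) :
    Continuous fun x => fderiv ℝ (fun y => fderiv ℝ u y v) x w :=
  ((contDiff_fderiv_apply hu v).continuous_fderiv one_ne_zero).clm_apply continuous_const

theorem dirDeriv2_eq_fderiv (hu : ContDiff ℝ 2 u) (v x : Plane) :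
    dirDeriv2 u v x = fderiv ℝ (fun y => fderiv ℝ u y v) x v := by
  have hline : ∀ {g : Plane → ℝ}, Differentiable ℝ g → ∀ t : ℝ,
      HasDerivAt (fun s : ℝ => g (x + s • v)) (fderiv ℝ g (x + t • v) v) t :=
    fun hg t => (hg _).hasFDerivAt.comp_hasDerivAt t
      (by simpa using ((hasDerivAt_id t).smul_const v).const_add x)
  have h₁ : (fun t : ℝ => deriv (fun s : ℝ => u (x + s • v)) t) =
      fun t => fderiv ℝ u (x + t • v) v :=
    funext fun t => (hline (hu.differentiable (by norm_num)) t).deriv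
  rw [dirDeriv2, h₁, (hline ((contDiff_fderiv_apply hu v).differentiable one_ne_zero) 0).deriv,
    zero_smul, add_zero]

theorem lap_eq_sum_fderiv (hu : ContDiff ℝ 2 u) :
    lap u = fun x => ∑ i : Fin 2,
      fderiv ℝ (fun y => fderiv ℝ u y (EuclideanSpace.single i 1)) x
        (EuclideanSpace.single i 1) :=
  funext fun x => Finset.sum_congr rfl fun _ _ => dirDeriv2_eq_fderiv hu _ x

theorem continuous_lap (hu : ContDiff ℝ 2 u) : Continuous (lap u) := by
  rw [lap_eq_sum_fderiv hu]
  exact continuous_finsetSum _ fun _ _ => continuous_fderiv_fderiv_apply hu _ _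

theorem setIntegral_fundamentalDomain_lap_eq_zero {ι : Type*} [Finite ι]
    (b : Module.Basis ι ℝ Plane) (μ : Measure Plane) [μ.IsAddHaarMeasure]
    (hu : ContDiff ℝ 2 u) (hper : ∀ i, Periodic u (b i)) :
    ∫ x in ZSpan.fundamentalDomain b, lap u x ∂μ = 0 := by
  rw [lap_eq_sum_fderiv hu, integral_finsetSum _ fun _ _ =>
    ZSpan.integrableOn_fundamentalDomain_of_continuous b μ (continuous_fderiv_fderiv_apply hu _ _)]
  exact Finset.sum_eq_zero fun i _ =>
    ZSpan.setIntegral_fundamentalDomain_fderiv_apply_eq_zero b μ (contDiff_fderiv_apply hu _)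
      (fun j => (hper j).fderiv.comp fun L => L _) _

end Laplacian

theorem coupling_terms_le {a c d s N : ℝ} (ha₀ : 0 ≤ a) (ha₁ : a ≤ 1) (hc : c ≤ 1)
    (hds : 0 < d * s) (hN : d * s ≤ N) :
    s ^ 2 * ((d / s) ^ 2 * a * (c - 1) - d / s * (a + c) * (a - 1)) ≤ 2 * N := by
  have hs : s ≠ 0 := by rintro rfl; simp at hds
  have hexpand : s ^ 2 * ((d / s) ^ 2 * a * (c - 1) - d / s * (a + c) * (a - 1)) =
      d ^ 2 * (a * (c - 1)) + d * s * ((a + c) * (1 - a)) := by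
    field_simp
    ring
  have hfirst : d ^ 2 * (a * (c - 1)) ≤ 0 :=
    mul_nonpos_of_nonneg_of_nonpos (sq_nonneg d)
      (mul_nonpos_of_nonneg_of_nonpos ha₀ (sub_nonpos.mpr hc))
  have hsecond : (a + c) * (1 - a) ≤ 2 := by nlinarith
  rw [hexpand]
  linarith [mul_le_mul_of_nonneg_left hsecond hds.le]

namespace GudnasonSetting

variable {S : GudnasonSetting}

def Valid.basis (hS : S.Valid) : Module.Basis (Fin 2) ℝ Plane :=
  basisOfLinearIndependentOfCardEqFinrank hS.indep (by simp)

theorem Valid.coe_basis (hS : S.Valid) : ⇑hS.basis = S.v :=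
  coe_basisOfLinearIndependentOfCardEqFinrank _ _

theorem Valid.fund_eq_fundamentalDomain (hS : S.Valid) :
    S.fund = ZSpan.fundamentalDomain hS.basis := by
  ext x
  constructor
  · rintro ⟨⟨s, t⟩, ⟨hs, ht⟩, rfl⟩ i
    rw [← hS.coe_basis]
    fin_cases i <;> simpa [Finsupp.single_apply]
  · intro hx
    refine ⟨(hS.basis.repr x 0, hS.basis.repr x 1), ⟨hx 0, hx 1⟩, ?_⟩
    simpa [Fin.sum_univ_two, hS.coe_basis] using hS.basis.sum_repr x

theorem volume_Zset (S : GudnasonSetting) : volume S.Zset = 0 := by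
  refine (Set.countable_iUnion fun i => ?_).measure_zero _
  refine (Set.countable_range fun k : Fin 2 → ℤ =>
    S.p i + (k 0 : ℝ) • S.v 0 + (k 1 : ℝ) • S.v 1).mono ?_
  rintro x ⟨k, rfl⟩
  exact ⟨k, rfl⟩

theorem one_div_ε_sq (S : GudnasonSetting) (n : ℕ) : 1 / S.ε n ^ 2 = (S.α n + S.β n) ^ 2 := by
  rw [ε, div_pow, one_pow, one_div_one_div]

theorem IsSolution.nonlinear₂_le_neg_lap_add {n : ℕ} {u₁ u₂ v₁ : Plane → ℝ}
    (hS : S.Valid) (hsol : S.IsSolution n u₁ u₂ v₁) {x : Plane} (hx : x ∉ S.Zset) :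
    1 / S.ε n ^ 2 * exp (u₂ x) * (1 - exp (u₂ x)) ≤ -lap u₂ x + 2 * S.𝔑 := by
  have hcoupling := coupling_terms_le (exp_pos (u₁ x)).le
    (exp_lt_one_iff.mpr (hsol.u₁_neg x hx)).le (exp_lt_one_iff.mpr (hsol.u₂_neg x)).le
    (hS.hcoup₁ n) (hS.hcoup₂ n)
  rw [hsol.eq₂ x hx, one_div_ε_sq, σ]
  linarith

end GudnasonSetting

open GudnasonSetting in
/-- The uniform `L¹` bound for the second nonlinear term (recall `|𝕋| = 1`). -/
theorem statement2 (S : GudnasonSetting) (hS : S.Valid) (n : ℕ)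
    (u₁ u₂ v₁ : Plane → ℝ) (hsol : S.IsSolution n u₁ u₂ v₁) :
    (∫ x in S.fund, (1 / (S.ε n) ^ 2) * Real.exp (u₂ x) * (1 - Real.exp (u₂ x))) ≤
        2 * S.𝔑 ∧
    (∫ x in S.fund, (1 / (S.ε n) ^ 2) * Real.exp (u₂ x) * (1 - Real.exp (u₂ x))) =
      ∫ x in S.fund, (1 / (S.ε n) ^ 2) * Real.exp (u₂ x) * |1 - Real.exp (u₂ x)| := by
  have habs : ∀ x, |1 - exp (u₂ x)| = 1 - exp (u₂ x) := fun x =>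
    abs_of_nonneg (sub_nonneg.mpr (exp_lt_one_iff.mpr (hsol.u₂_neg x)).le)
  refine ⟨?_, by simp_rw [habs]⟩
  have hper : ∀ i, Periodic u₂ (hS.basis i) := fun i x => by
    rw [hS.coe_basis]; exact hsol.per₂ x i
  rw [hS.fund_eq_fundamentalDomain]
  calc _ ≤ ∫ x in ZSpan.fundamentalDomain hS.basis, (-lap u₂ x + 2 * S.𝔑) :=
        integral_mono_ae
          (ZSpan.integrableOn_fundamentalDomain_of_continuous _ _
            (by have := hsol.u₂_smooth.continuous; fun_prop))
          (ZSpan.integrableOn_fundamentalDomain_of_continuous _ _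
            ((continuous_lap hsol.u₂_smooth).neg.add continuous_const))
          (ae_restrict_of_ae ((measure_eq_zero_iff_ae_notMem.mp S.volume_Zset).mono
            fun x hx => hsol.nonlinear₂_le_neg_lap_add hS hx))
    _ = 2 * S.𝔑 := by
      rw [integral_add, integral_neg,
        setIntegral_fundamentalDomain_lap_eq_zero _ _ hsol.u₂_smooth hper,
        setIntegral_const, measureReal_def, ← hS.fund_eq_fundamentalDomain, hS.area]
      · simp
      · exact ZSpan.integrableOn_fundamentalDomain_of_continuous _ _
          (continuous_lap hsol.u₂_smooth).neg
      · exact ZSpan.integrableOn_fundamentalDomain_of_continuous _ _ continuous_const
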